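/- Let q ∈ ℂ with q ∉ {0,1,2}, and let V ⊆ ℂ be a set satisfying: 0 ∈ V; 1 ∉ V; 1 − q ∉ V·V; V·V ⊆ V; and for all v₁, v₂ ∈ V one has f_q(v₁)·f_q(v₂) ≠ 1 and f_q(f_q(v₁)·f_q(v₂)) ∈ V. Then Z(G;q) ≠ 0 for every series-parallel graph G. -/

import Mathlib

open Polynomial

noncomputable section

/-- A finite (undirected) multigraph: a finite vertex type, a finite edge index type,
and a map assigning to each edge its pair of endpoints. -/
structure Multigraph where
  V : Type
  E : Type
  [finV : Finite V]
  [finE : Fintype E]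
  ends : E → V × V

attribute [instance] Multigraph.finV Multigraph.finE

namespace Multigraph

/-- The spanning subgraph `(V, F)` determined by a set `F` of edges, as a simple graph
recording adjacency. -/
def spanning (G : Multigraph) (F : Finset G.E) : SimpleGraph G.V where
  Adj u v := u ≠ v ∧ ∃ e ∈ F, G.ends e = (u, v) ∨ G.ends e = (v, u)
  symm := by
    constructor
    rintro u v ⟨huv, e, he, h⟩
    exact ⟨huv.symm, e, he, h.symm⟩
  loopless := by constructor; rintro v ⟨hv, -⟩; exact hv rfl

/-- `k(F)`: the number of connected components of the spanning subgraph `(V, F)`. -/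
def k (G : Multigraph) (F : Finset G.E) : ℕ :=
  Nat.card (G.spanning F).ConnectedComponent

/-- The chromatic polynomial `Z(G;q) = ∑_{F ⊆ E} (-1)^{|F|} q^{k(F)}`. -/
def Z (G : Multigraph) : Polynomial ℂ :=
  ∑ F : Finset G.E, (-1 : Polynomial ℂ) ^ F.card * X ^ G.k F

/-- A multigraph is loopless if no edge has equal endpoints. -/
def Loopless (G : Multigraph) : Prop := ∀ e : G.E, (G.ends e).1 ≠ (G.ends e).2

/-- The degree of a vertex: the number of edge-ends incident to it. -/
def degree (G : Multigraph) (x : G.V) : ℕ :=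
  Nat.card {e : G.E // (G.ends e).1 = x} + Nat.card {e : G.E // (G.ends e).2 = x}

end Multigraph

/-- A two-terminal graph: a finite multigraph together with two distinct
distinguished vertices, the start vertex `s` and the end vertex `t`. -/
structure TTGraph extends Multigraph where
  s : V
  t : V
  hst : s ≠ t

namespace TTGraph

/-- The chromatic polynomial of (the underlying multigraph of) a two-terminal graph. -/
def Z (G : TTGraph) : Polynomial ℂ := G.toMultigraph.Z

def Loopless (G : TTGraph) : Prop := G.toMultigraph.Loopless

/-- A single edge `K₂`, with its two endpoints as terminals. -/
def K2 : TTGraph where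
  V := Bool
  E := Unit
  ends := fun _ => (false, true)
  s := false
  t := true
  hst := Bool.false_ne_true

/-- The identification map used in the parallel composition: `s₂ ↦ s₁`, `t₂ ↦ t₁`. -/
def parMap (G₁ G₂ : TTGraph) (x : G₂.V) :
    G₁.V ⊕ {y : G₂.V // y ≠ G₂.s ∧ y ≠ G₂.t} := by
  classical
  exact if h1 : x = G₂.s then Sum.inl G₁.s
    else if h2 : x = G₂.t then Sum.inl G₁.t
    else Sum.inr ⟨x, h1, h2⟩

/-- Parallel composition of two-terminal graphs: the disjoint union with `s₁` and `s₂`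
identified (the new start) and `t₁` and `t₂` identified (the new end). -/
def par (G₁ G₂ : TTGraph) : TTGraph where
  V := G₁.V ⊕ {y : G₂.V // y ≠ G₂.s ∧ y ≠ G₂.t}
  E := G₁.E ⊕ G₂.E
  ends := Sum.elim
    (fun e => (Sum.inl (G₁.ends e).1, Sum.inl (G₁.ends e).2))
    (fun e => (parMap G₁ G₂ (G₂.ends e).1, parMap G₁ G₂ (G₂.ends e).2))
  s := Sum.inl G₁.s
  t := Sum.inl G₁.t
  hst := fun h => G₁.hst (Sum.inl.inj h)

/-- The identification map used in the series composition: `s₂ ↦ t₁`. -/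
def serMap (G₁ G₂ : TTGraph) (x : G₂.V) :
    G₁.V ⊕ {y : G₂.V // y ≠ G₂.s} := by
  classical
  exact if h : x = G₂.s then Sum.inl G₁.t else Sum.inr ⟨x, h⟩

/-- Series composition of two-terminal graphs: the disjoint union with `t₁` and `s₂`
identified; the new start is `s₁` and the new end is `t₂`. -/
def ser (G₁ G₂ : TTGraph) : TTGraph where
  V := G₁.V ⊕ {y : G₂.V // y ≠ G₂.s}
  E := G₁.E ⊕ G₂.E
  ends := Sum.elim
    (fun e => (Sum.inl (G₁.ends e).1, Sum.inl (G₁.ends e).2))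
    (fun e => (serMap G₁ G₂ (G₂.ends e).1, serMap G₁ G₂ (G₂.ends e).2))
  s := Sum.inl G₁.s
  t := Sum.inr ⟨G₂.t, G₂.hst.symm⟩
  hst := Sum.inl_ne_inr

/-- `Z^dif(G;q) := Z(G ∥ K₂; q)`. -/
def Zdif (G : TTGraph) : Polynomial ℂ := (G.par K2).Z

/-- `Z^same(G;q) := Z(G;q) - Z^dif(G;q)`. -/
def Zsame (G : TTGraph) : Polynomial ℂ := G.Z - G.Zdif

/-- Series-parallel two-terminal graphs: those obtained from a single edge `K₂` by
repeated series and parallel compositions. -/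
inductive IsSP : TTGraph → Prop
  | K2 : IsSP K2
  | ser {G₁ G₂ : TTGraph} : IsSP G₁ → IsSP G₂ → IsSP (G₁.ser G₂)
  | par {G₁ G₂ : TTGraph} : IsSP G₁ → IsSP G₂ → IsSP (G₁.par G₂)

/-- No edge of `G` joins the two terminals (membership in `𝒢*_SP` for series-parallel `G`). -/
def NoSTEdge (G : TTGraph) : Prop :=
  ∀ e : G.E, G.ends e ≠ (G.s, G.t) ∧ G.ends e ≠ (G.t, G.s)

end TTGraph


/-- The Möbius transformation `f_q(y) = 1 + q/(y-1)`. -/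
def fq (q y : ℂ) : ℂ := 1 + q / (y - 1)

/-- The product set `V·V = {v·w : v, w ∈ V}`. -/
def prodSet (V : Set ℂ) : Set ℂ := {z | ∃ v ∈ V, ∃ w ∈ V, z = v * w}

/-!
Split the subgraph expansion `Z = Zconn + Zsep` according to whether `F` joins the terminals.
At `q = n ≥ 2`, if `P(x, y)` counts the proper `n`-colourings with colours `x, y` at `s, t`, then
`n² P(x, y) = Zsep(n) + [x = y] n Zconn(n)`. Since `P` multiplies entrywise under parallel and as a
matrix under series composition, this gives polynomial recurrences for `(Zconn, Zsep)`.
In terms of `w = 1 + q Zconn / Zsep` (the ratio `P(x, x) / P(x, y)` at `q = n`), parallel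
composition multiplies the `w`s and series composition sends `(w₁, w₂)` to `f_q(f_q(w₁) f_q(w₂))`,
so `w` stays in `V`. Finally `q Z = Zsep (w - 1 + q)` stays nonzero under parallel composition
because `1 - q ∉ V·V`, and under series composition because `q Z(G₁ ⋈ G₂) = Z(G₁) Z(G₂)`.
-/

open scoped Classical

lemma card_apply_eq_apply_mul {C β : Type*} [Finite C] [Finite β] {c₁ c₂ : C} (h : c₁ ≠ c₂) :
    Nat.card {g : C → β // g c₁ = g c₂} * Nat.card β = Nat.card β ^ Nat.card C := by
  let e : {g : C → β // g c₁ = g c₂} × β ≃ (C → β) :=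
    { toFun := fun p => Function.update p.1.1 c₁ p.2
      invFun := fun f => (⟨Function.update f c₁ (f c₂), by
          rw [Function.update_self, Function.update_of_ne h.symm]⟩, f c₁)
      left_inv := fun ⟨⟨g, hg⟩, b⟩ => by
        ext1
        · ext1
          simp only [Function.update_of_ne h.symm, Function.update_idem]
          rw [← hg, Function.update_eq_self]
        · simp
      right_inv := fun f => by simp }
  rw [← Nat.card_prod, Nat.card_congr e, Nat.card_fun]

lemma natCard_subtype_eq_sum {α R : Type*} [Fintype α] [AddCommMonoidWithOne R] (P : α → Prop) :
    (Nat.card {x // P x} : R) = ∑ x, if P x then 1 else 0 := by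
  rw [Finset.sum_boole, Nat.card_eq_fintype_card, Fintype.card_subtype]

lemma Polynomial.eq_of_eval_natCast {R : Type*} [CommRing R] [IsDomain R] [CharZero R]
    {p r : R[X]} (h : ∀ (n : ℕ) [n.AtLeastTwo], p.eval (n : R) = r.eval (n : R)) : p = r := by
  refine eq_of_infinite_eval_eq p r
    (((Set.Ici_infinite 2).image Nat.cast_injective.injOn).mono ?_)
  rintro _ ⟨n, hn, rfl⟩
  have : n.AtLeastTwo := ⟨hn⟩
  exact h n

lemma Finset.sum_add_ite_mul_add_ite {ι R : Type*} [Fintype ι] [DecidableEq ι] [CommRing R]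
    (x z : ι) (β₁ α₁ β₂ α₂ : R) :
    ∑ y, (β₁ + if x = y then α₁ else 0) * (β₂ + if y = z then α₂ else 0) =
      Fintype.card ι * β₁ * β₂ + α₁ * β₂ + β₁ * α₂ + if x = z then α₁ * α₂ else 0 := by
  simp only [add_mul, mul_add, ite_mul, mul_ite, zero_mul, mul_zero, Finset.sum_add_distrib,
    Finset.sum_ite_eq, Finset.sum_ite_eq', Finset.mem_univ, if_true, Finset.sum_const,
    Finset.card_univ, nsmul_eq_mul]
  split_ifs with h
  · subst h; ring
  · ring

namespace Multigraph

variable (G : Multigraph) {n : ℕ}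

def Monochromatic (F : Finset G.E) (σ : G.V → Fin n) : Prop :=
  ∀ e ∈ F, σ (G.ends e).1 = σ (G.ends e).2

def IsProperColoring (σ : G.V → Fin n) : Prop :=
  ∀ e, σ (G.ends e).1 ≠ σ (G.ends e).2

lemma monochromatic_iff_forall_reachable (F : Finset G.E) (σ : G.V → Fin n) :
    G.Monochromatic F σ ↔ ∀ u v, (G.spanning F).Reachable u v → σ u = σ v := by
  constructor
  · rintro h u v ⟨p⟩
    induction p with
    | nil => rfl
    | cons hadj _ ih =>
      obtain ⟨-, e, he, hends | hends⟩ := hadj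
      · exact (hends ▸ h e he).trans ih
      · exact (hends ▸ h e he).symm.trans ih
  · intro h e he
    by_cases hloop : (G.ends e).1 = (G.ends e).2
    · rw [hloop]
    · exact h _ _ (SimpleGraph.Adj.reachable ⟨hloop, e, he, Or.inl rfl⟩)

def monochromaticEquiv (F : Finset G.E) (n : ℕ) :
    {σ : G.V → Fin n // G.Monochromatic F σ} ≃ ((G.spanning F).ConnectedComponent → Fin n) where
  toFun σ := SimpleGraph.ConnectedComponent.lift σ.1
    fun u v p _ => (G.monochromatic_iff_forall_reachable F σ.1).1 σ.2 u v ⟨p⟩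
  invFun g := ⟨fun v => g ((G.spanning F).connectedComponentMk v),
    (G.monochromatic_iff_forall_reachable F _).2
      fun _ _ huv => congrArg g (SimpleGraph.ConnectedComponent.sound huv)⟩
  left_inv _ := rfl
  right_inv _ := funext fun c => SimpleGraph.ConnectedComponent.ind (fun _ => rfl) c

lemma card_monochromatic (F : Finset G.E) :
    Nat.card {σ : G.V → Fin n // G.Monochromatic F σ} = n ^ G.k F := by
  rw [Nat.card_congr (G.monochromaticEquiv F n), Nat.card_fun, Nat.card_fin, k]

lemma sum_neg_one_pow_monochromatic (σ : G.V → Fin n) :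
    ∑ F : Finset G.E, (if G.Monochromatic F σ then (-1 : ℂ) ^ F.card else 0) =
      if G.IsProperColoring σ then 1 else 0 := by
  set D := Finset.univ.filter fun e => σ (G.ends e).1 = σ (G.ends e).2
  have hD : ∀ F, G.Monochromatic F σ ↔ F ⊆ D := fun F => by
    simp [Monochromatic, Finset.subset_iff, D]
  have hproper : G.IsProperColoring σ ↔ D = ∅ := by
    simp [IsProperColoring, D, Finset.filter_eq_empty_iff]
  simp_rw [hD, hproper]
  rw [← Finset.sum_filter, Finset.filter_subset_univ]
  exact_mod_cast Finset.sum_powerset_neg_one_pow_card (x := D)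

lemma sum_neg_one_pow_mul_card_monochromatic (S : (G.V → Fin n) → Prop) :
    ∑ F : Finset G.E, (-1 : ℂ) ^ F.card *
        Nat.card {σ : G.V → Fin n // G.Monochromatic F σ ∧ S σ} =
      Nat.card {σ : G.V → Fin n // G.IsProperColoring σ ∧ S σ} := by
  have := Fintype.ofFinite G.V
  simp only [natCard_subtype_eq_sum, Finset.mul_sum]
  rw [Finset.sum_comm]
  refine Finset.sum_congr rfl fun σ _ => ?_
  by_cases hS : S σ
  · simp only [hS, and_true, ← sum_neg_one_pow_monochromatic, mul_ite, mul_one, mul_zero]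
  · simp [hS]

lemma eval_Z_natCast :
    G.Z.eval (n : ℂ) = Nat.card {σ : G.V → Fin n // G.IsProperColoring σ} := by
  have h := G.sum_neg_one_pow_mul_card_monochromatic (n := n) fun _ => True
  simp only [and_true] at h
  simp only [← h, Z, eval_finsetSum, eval_mul, eval_pow, eval_neg, eval_one, eval_X,
    card_monochromatic, Nat.cast_pow]

end Multigraph

namespace TTGraph

open Multigraph

def Zconn (G : TTGraph) : ℂ[X] :=
  ∑ F with (G.spanning F).Reachable G.s G.t, (-1) ^ F.card * X ^ G.k F

def Zsep (G : TTGraph) : ℂ[X] :=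
  ∑ F with ¬(G.spanning F).Reachable G.s G.t, (-1) ^ F.card * X ^ G.k F

lemma Zconn_add_Zsep (G : TTGraph) : G.Zconn + G.Zsep = G.Z :=
  Finset.sum_filter_add_sum_filter_not _ _ _

variable {n : ℕ}

lemma card_monochromatic_terminals_mul (G : TTGraph) (F : Finset G.E) :
    Nat.card {σ : G.V → Fin n // G.Monochromatic F σ ∧ σ G.s = σ G.t} * n =
      if (G.spanning F).Reachable G.s G.t then n ^ (G.k F + 1) else n ^ G.k F := by
  split_ifs with hreach
  · have e : {σ : G.V → Fin n // G.Monochromatic F σ ∧ σ G.s = σ G.t} ≃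
        {σ : G.V → Fin n // G.Monochromatic F σ} :=
      Equiv.subtypeEquivRight fun σ =>
        ⟨And.left, fun h => ⟨h, (G.monochromatic_iff_forall_reachable F σ).1 h _ _ hreach⟩⟩
    rw [Nat.card_congr e, card_monochromatic, pow_succ]
  · have e : {σ : G.V → Fin n // G.Monochromatic F σ ∧ σ G.s = σ G.t} ≃
        {g : (G.spanning F).ConnectedComponent → Fin n //
          g ((G.spanning F).connectedComponentMk G.s) =
            g ((G.spanning F).connectedComponentMk G.t)} :=
      (Equiv.subtypeSubtypeEquivSubtypeInter _ _).symm.trans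
        ((G.monochromaticEquiv F n).subtypeEquiv fun _ => Iff.rfl)
    have h := card_apply_eq_apply_mul (β := Fin n)
      fun h => hreach (SimpleGraph.ConnectedComponent.eq.1 h)
    rwa [Nat.card_fin, ← Nat.card_congr e] at h

lemma natCast_mul_eval_Zconn_add_eval_Zsep (G : TTGraph) :
    n * G.Zconn.eval (n : ℂ) + G.Zsep.eval (n : ℂ) =
      n * Nat.card {σ : G.V → Fin n // G.IsProperColoring σ ∧ σ G.s = σ G.t} := by
  rw [← sum_neg_one_pow_mul_card_monochromatic, Finset.mul_sum, Zconn, Zsep, eval_finsetSum,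
    eval_finsetSum, Finset.sum_filter, Finset.sum_filter, Finset.mul_sum, ← Finset.sum_add_distrib]
  refine Finset.sum_congr rfl fun F _ => ?_
  have h := congrArg (Nat.cast : ℕ → ℂ) (G.card_monochromatic_terminals_mul (n := n) F)
  push_cast [apply_ite (Nat.cast : ℕ → ℂ)] at h
  split_ifs at h ⊢ <;> simp only [eval_mul, eval_pow, eval_neg, eval_one, eval_X] <;>
    linear_combination -(-1 : ℂ) ^ F.card * h

def numColorings (G : TTGraph) (n : ℕ) (x y : Fin n) : ℕ :=
  Nat.card {σ : G.V → Fin n // G.IsProperColoring σ ∧ σ G.s = x ∧ σ G.t = y}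

lemma numColorings_perm (G : TTGraph) (π : Equiv.Perm (Fin n)) (x y : Fin n) :
    G.numColorings n x y = G.numColorings n (π x) (π y) :=
  Nat.card_congr <| ((Equiv.refl G.V).arrowCongr π).subtypeEquiv fun σ => by
    simp [IsProperColoring, π.injective.ne_iff]

lemma numColorings_self (G : TTGraph) (x y : Fin n) :
    G.numColorings n x x = G.numColorings n y y := by
  simpa using G.numColorings_perm (Equiv.swap x y) x x

lemma numColorings_of_ne (G : TTGraph) {x y a b : Fin n} (hxy : x ≠ y) (hab : a ≠ b) :
    G.numColorings n x y = G.numColorings n a b := by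
  set π := (Equiv.swap x a).trans (Equiv.swap (Equiv.swap x a y) b)
  have hπx : π x = a := by
    have : Equiv.swap x a y ≠ a := fun h => hxy ((Equiv.swap x a).injective
      (h.trans (Equiv.swap_apply_left x a).symm)).symm
    simp [π, Equiv.swap_apply_of_ne_of_ne this.symm hab]
  have hπy : π y = b := by simp [π]
  rw [G.numColorings_perm π, hπx, hπy]

lemma numColorings_eq_ite (G : TTGraph) {a b : Fin n} (hab : a ≠ b) (x y : Fin n) :
    G.numColorings n x y = if x = y then G.numColorings n a a else G.numColorings n a b := by
  split_ifs with hxy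
  · rw [hxy, G.numColorings_self y a]
  · exact G.numColorings_of_ne hxy hab

lemma card_proper_eq_sum (G : TTGraph) :
    Nat.card {σ : G.V → Fin n // G.IsProperColoring σ} =
      ∑ x, ∑ y, G.numColorings n x y := by
  rw [← Nat.card_congr (Equiv.sigmaFiberEquiv fun σ : {σ // G.IsProperColoring σ} =>
      (σ.1 G.s, σ.1 G.t)), Nat.card_sigma, ← Fintype.sum_prod_type']
  refine Finset.sum_congr rfl fun p _ => Nat.card_congr ?_
  exact { toFun := fun σ => ⟨σ.1.1, σ.1.2, congrArg Prod.fst σ.2, congrArg Prod.snd σ.2⟩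
          invFun := fun σ => ⟨⟨σ.1, σ.2.1⟩, Prod.ext σ.2.2.1 σ.2.2.2⟩ }

lemma card_proper_terminals_eq_sum (G : TTGraph) :
    Nat.card {σ : G.V → Fin n // G.IsProperColoring σ ∧ σ G.s = σ G.t} =
      ∑ x, G.numColorings n x x := by
  rw [← Nat.card_congr (Equiv.sigmaFiberEquiv fun σ :
      {σ : G.V → Fin n // G.IsProperColoring σ ∧ σ G.s = σ G.t} => σ.1 G.s), Nat.card_sigma]
  refine Finset.sum_congr rfl fun x _ => Nat.card_congr ?_
  exact { toFun := fun σ => ⟨σ.1.1, σ.1.2.1, σ.2, σ.1.2.2.symm.trans σ.2⟩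
          invFun := fun σ => ⟨⟨σ.1, σ.2.1, σ.2.2.1.trans σ.2.2.2.symm⟩, σ.2.2.1⟩ }

theorem sq_mul_numColorings (G : TTGraph) [n.AtLeastTwo] (x y : Fin n) :
    (n : ℂ) ^ 2 * G.numColorings n x y =
      G.Zsep.eval (n : ℂ) + if x = y then n * G.Zconn.eval (n : ℂ) else 0 := by
  obtain ⟨a, b, hab⟩ := exists_pair_ne (Fin n)
  set S : ℂ := (G.numColorings n a a : ℂ)
  set D : ℂ := (G.numColorings n a b : ℂ)
  have hcnt (x y : Fin n) : (G.numColorings n x y : ℂ) = D + if x = y then S - D else 0 := by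
    rw [G.numColorings_eq_ite hab]
    split_ifs <;> ring
  have hZ : G.Zconn.eval (n : ℂ) + G.Zsep.eval (n : ℂ) = n * (n * D + (S - D)) := by
    rw [← eval_add, Zconn_add_Zsep, TTGraph.Z, eval_Z_natCast, card_proper_eq_sum]
    simp only [Nat.cast_sum, hcnt, Finset.sum_add_distrib, Finset.sum_const, Finset.card_univ,
      Fintype.card_fin, nsmul_eq_mul, Finset.sum_ite_eq, Finset.mem_univ, if_true]
    ring
  have hsame : n * G.Zconn.eval (n : ℂ) + G.Zsep.eval (n : ℂ) = n * (n * S) := by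
    rw [natCast_mul_eval_Zconn_add_eval_Zsep, card_proper_terminals_eq_sum]
    simp [hcnt]
  have hn₁ : (n : ℂ) - 1 ≠ 0 := sub_ne_zero.2 (Nat.cast_ne_one.2 Nat.AtLeastTwo.ne_one)
  have hZconn : G.Zconn.eval (n : ℂ) = n * (S - D) :=
    mul_left_cancel₀ hn₁ (by linear_combination hsame - hZ)
  rw [hcnt]
  split_ifs
  · linear_combination -hZ + (1 - n) * hZconn
  · linear_combination -hZ + hZconn

lemma numColorings_K2 (x y : Fin n) : K2.numColorings n x y = if x = y then 0 else 1 := by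
  split_ifs with hxy
  · rw [numColorings, Nat.card_eq_zero]
    exact Or.inl ⟨fun ⟨σ, hσ, hs, ht⟩ => hσ () (hs.trans (hxy.trans ht.symm))⟩
  · rw [numColorings, Nat.card_eq_one_iff_exists]
    refine ⟨⟨fun v => cond v y x, fun _ => hxy, rfl, rfl⟩, ?_⟩
    rintro ⟨σ, -, hs, ht⟩
    refine Subtype.ext (funext fun v => ?_)
    cases v
    exacts [hs, ht]

@[simp] lemma parMap_s (G₁ G₂ : TTGraph) : parMap G₁ G₂ G₂.s = Sum.inl G₁.s := by
  simp [parMap]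

@[simp] lemma parMap_t (G₁ G₂ : TTGraph) : parMap G₁ G₂ G₂.t = Sum.inl G₁.t := by
  simp [parMap, G₂.hst.symm]

lemma elim_parMap (G₁ G₂ : TTGraph) (σ₁ : G₁.V → Fin n) (σ₂ : G₂.V → Fin n)
    (hs : σ₂ G₂.s = σ₁ G₁.s) (ht : σ₂ G₂.t = σ₁ G₁.t) (v : G₂.V) :
    Sum.elim σ₁ (σ₂ ∘ Subtype.val) (parMap G₁ G₂ v) = σ₂ v := by
  unfold parMap
  split_ifs with hvs hvt
  · simp [hvs, hs]
  · simp [hvt, ht]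
  · rfl

lemma numColorings_par (G₁ G₂ : TTGraph) (x y : Fin n) :
    (G₁.par G₂).numColorings n x y = G₁.numColorings n x y * G₂.numColorings n x y := by
  rw [numColorings, numColorings, numColorings, ← Nat.card_prod]
  refine Nat.card_congr
    { toFun := fun τ => (⟨fun v => τ.1 (Sum.inl v), fun e => τ.2.1 (Sum.inl e), τ.2.2⟩,
        ⟨fun v => τ.1 (parMap G₁ G₂ v), fun e => τ.2.1 (Sum.inr e),
          (congrArg τ.1 (parMap_s G₁ G₂)).trans τ.2.2.1,
          (congrArg τ.1 (parMap_t G₁ G₂)).trans τ.2.2.2⟩)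
      invFun := fun ⟨σ₁, σ₂⟩ => ⟨Sum.elim σ₁.1 (σ₂.1 ∘ Subtype.val), ?_, σ₁.2.2⟩
      left_inv := fun τ => ?_
      right_inv := fun ⟨σ₁, σ₂⟩ => ?_ }
  · have h := elim_parMap G₁ G₂ σ₁.1 σ₂.1
      (σ₂.2.2.1.trans σ₁.2.2.1.symm) (σ₂.2.2.2.trans σ₁.2.2.2.symm)
    rintro (e | e)
    · exact σ₁.2.1 e
    · simpa [par, h] using σ₂.2.1 e
  · ext (v | ⟨v, hvs, hvt⟩)
    · rfl
    · simp [parMap, hvs, hvt]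
  · exact Prod.ext rfl <| Subtype.ext <| funext <| elim_parMap G₁ G₂ σ₁.1 σ₂.1
      (σ₂.2.2.1.trans σ₁.2.2.1.symm) (σ₂.2.2.2.trans σ₁.2.2.2.symm)

@[simp] lemma serMap_s (G₁ G₂ : TTGraph) : serMap G₁ G₂ G₂.s = Sum.inl G₁.t := by
  simp [serMap]

@[simp] lemma serMap_t (G₁ G₂ : TTGraph) :
    serMap G₁ G₂ G₂.t = Sum.inr ⟨G₂.t, G₂.hst.symm⟩ := by
  simp [serMap, G₂.hst.symm]

lemma elim_serMap (G₁ G₂ : TTGraph) (σ₁ : G₁.V → Fin n) (σ₂ : G₂.V → Fin n)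
    (hs : σ₂ G₂.s = σ₁ G₁.t) (v : G₂.V) :
    Sum.elim σ₁ (σ₂ ∘ Subtype.val) (serMap G₁ G₂ v) = σ₂ v := by
  unfold serMap
  split_ifs with hvs
  · simp [hvs, hs]
  · rfl

lemma numColorings_ser (G₁ G₂ : TTGraph) (x z : Fin n) :
    (G₁.ser G₂).numColorings n x z = ∑ y, G₁.numColorings n x y * G₂.numColorings n y z := by
  rw [numColorings, ← Nat.card_congr (Equiv.sigmaFiberEquiv fun τ :
    {τ : (G₁.ser G₂).V → Fin n // _} => τ.1 (Sum.inl G₁.t)), Nat.card_sigma]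
  refine Finset.sum_congr rfl fun y _ => ?_
  rw [numColorings, numColorings, ← Nat.card_prod]
  refine Nat.card_congr
    { toFun := fun τ => (⟨fun v => τ.1.1 (Sum.inl v), fun e => τ.1.2.1 (Sum.inl e),
          τ.1.2.2.1, τ.2⟩,
        ⟨fun v => τ.1.1 (serMap G₁ G₂ v), fun e => τ.1.2.1 (Sum.inr e),
          (congrArg τ.1.1 (serMap_s G₁ G₂)).trans τ.2,
          (congrArg τ.1.1 (serMap_t G₁ G₂)).trans τ.1.2.2.2⟩)
      invFun := fun ⟨σ₁, σ₂⟩ =>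
        ⟨⟨Sum.elim σ₁.1 (σ₂.1 ∘ Subtype.val), ?_, σ₁.2.2.1, σ₂.2.2.2⟩, σ₁.2.2.2⟩
      left_inv := fun τ => ?_
      right_inv := fun ⟨σ₁, σ₂⟩ => ?_ }
  · have h := elim_serMap G₁ G₂ σ₁.1 σ₂.1 (σ₂.2.2.1.trans σ₁.2.2.2.symm)
    rintro (e | e)
    · exact σ₁.2.1 e
    · simpa [ser, h] using σ₂.2.1 e
  · refine Subtype.ext (Subtype.ext (funext fun v => ?_))
    rcases v with v | ⟨v, hvs⟩
    · rfl
    · simp [serMap, hvs]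
  · exact Prod.ext rfl <| Subtype.ext <| funext <|
      elim_serMap G₁ G₂ σ₁.1 σ₂.1 (σ₂.2.2.1.trans σ₁.2.2.2.symm)

lemma eval_Zsep_eq (G : TTGraph) [n.AtLeastTwo] {x y : Fin n} (hxy : x ≠ y) :
    G.Zsep.eval (n : ℂ) = n ^ 2 * G.numColorings n x y := by
  simp [sq_mul_numColorings, hxy]

lemma eval_Zsep_add_eval_Zconn (G : TTGraph) [n.AtLeastTwo] (x : Fin n) :
    G.Zsep.eval (n : ℂ) + n * G.Zconn.eval (n : ℂ) = n ^ 2 * G.numColorings n x x := by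
  simp [sq_mul_numColorings]

lemma Zsep_K2 : K2.Zsep = X ^ 2 :=
  eq_of_eval_natCast fun n _ => by
    obtain ⟨x, y, hxy⟩ := exists_pair_ne (Fin n)
    simp [eval_Zsep_eq K2 hxy, numColorings_K2, hxy]

lemma Zconn_K2 : K2.Zconn = -X :=
  eq_of_eval_natCast fun n _ => by
    obtain ⟨x, y, hxy⟩ := exists_pair_ne (Fin n)
    have h := eval_Zsep_add_eval_Zconn K2 x
    rw [eval_Zsep_eq K2 hxy, numColorings_K2, numColorings_K2, if_neg hxy, if_pos rfl] at h
    refine mul_left_cancel₀ (NeZero.ne (n : ℂ)) ?_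
    simp only [eval_neg, eval_X]
    linear_combination h

lemma Zsep_par (G₁ G₂ : TTGraph) : (G₁.par G₂).Zsep * X ^ 2 = G₁.Zsep * G₂.Zsep :=
  eq_of_eval_natCast fun n _ => by
    obtain ⟨x, y, hxy⟩ := exists_pair_ne (Fin n)
    simp only [eval_mul, eval_pow, eval_X, eval_Zsep_eq _ hxy, numColorings_par]
    push_cast
    ring

lemma Zconn_par (G₁ G₂ : TTGraph) :
    (G₁.par G₂).Zconn * X ^ 2 = G₁.Zconn * G₂.Zconn * X + G₁.Zconn * G₂.Zsep + G₂.Zconn * G₁.Zsep :=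
  eq_of_eval_natCast fun n _ => by
    obtain ⟨x, -⟩ := exists_pair_ne (Fin n)
    have hB := congrArg (eval (n : ℂ)) (Zsep_par G₁ G₂)
    have h := eval_Zsep_add_eval_Zconn (G₁.par G₂) x
    have h₁ := eval_Zsep_add_eval_Zconn G₁ x
    have h₂ := eval_Zsep_add_eval_Zconn G₂ x
    rw [numColorings_par, Nat.cast_mul] at h
    simp only [eval_mul, eval_add, eval_pow, eval_X] at hB ⊢
    refine mul_left_cancel₀ (NeZero.ne (n : ℂ)) ?_
    linear_combination n ^ 2 * h - hB - (G₂.Zsep.eval (n : ℂ) + n * G₂.Zconn.eval (n : ℂ)) * h₁ -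
      n ^ 2 * (G₁.numColorings n x x : ℂ) * h₂

lemma pow_four_mul_numColorings_ser (G₁ G₂ : TTGraph) [n.AtLeastTwo] (x z : Fin n) :
    (n : ℂ) ^ 4 * (G₁.ser G₂).numColorings n x z =
      n * (G₁.Zsep.eval (n : ℂ) * G₂.Zsep.eval (n : ℂ) +
        G₁.Zconn.eval (n : ℂ) * G₂.Zsep.eval (n : ℂ) +
        G₁.Zsep.eval (n : ℂ) * G₂.Zconn.eval (n : ℂ)) +
      if x = z then n ^ 2 * (G₁.Zconn.eval (n : ℂ) * G₂.Zconn.eval (n : ℂ)) else 0 := by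
  rw [numColorings_ser]
  push_cast
  rw [Finset.mul_sum]
  calc ∑ y, (n : ℂ) ^ 4 * (G₁.numColorings n x y * G₂.numColorings n y z)
      = ∑ y, (G₁.Zsep.eval (n : ℂ) + if x = y then n * G₁.Zconn.eval (n : ℂ) else 0) *
          (G₂.Zsep.eval (n : ℂ) + if y = z then n * G₂.Zconn.eval (n : ℂ) else 0) := by
        refine Finset.sum_congr rfl fun y _ => ?_
        rw [← sq_mul_numColorings, ← sq_mul_numColorings]
        ring
    _ = _ := by
        rw [Finset.sum_add_ite_mul_add_ite, Fintype.card_fin]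
        split_ifs <;> ring

lemma Zsep_ser (G₁ G₂ : TTGraph) :
    (G₁.ser G₂).Zsep * X = G₁.Zconn * G₂.Zsep + G₂.Zconn * G₁.Zsep + G₁.Zsep * G₂.Zsep :=
  eq_of_eval_natCast fun n _ => by
    obtain ⟨x, z, hxz⟩ := exists_pair_ne (Fin n)
    have h := pow_four_mul_numColorings_ser G₁ G₂ x z
    rw [if_neg hxz, show (n : ℂ) ^ 4 = n ^ 2 * n ^ 2 by ring, mul_assoc,
      ← eval_Zsep_eq _ hxz] at h
    simp only [eval_mul, eval_add, eval_X]
    refine mul_left_cancel₀ (NeZero.ne (n : ℂ)) ?_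
    linear_combination h

lemma Zconn_ser (G₁ G₂ : TTGraph) : (G₁.ser G₂).Zconn * X = G₁.Zconn * G₂.Zconn :=
  eq_of_eval_natCast fun n _ => by
    obtain ⟨x, -⟩ := exists_pair_ne (Fin n)
    have hB := congrArg (eval (n : ℂ)) (Zsep_ser G₁ G₂)
    have h := pow_four_mul_numColorings_ser G₁ G₂ x x
    rw [if_pos rfl, show (n : ℂ) ^ 4 = n ^ 2 * n ^ 2 by ring, mul_assoc,
      ← eval_Zsep_add_eval_Zconn] at h
    simp only [eval_mul, eval_add, eval_X] at hB ⊢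
    refine mul_left_cancel₀ (pow_ne_zero 2 (NeZero.ne (n : ℂ))) ?_
    linear_combination h - n * hB

end TTGraph

lemma fq_mul_fq_sub_one {q w₁ w₂ : ℂ} (hw₁ : w₁ ≠ 1) (hw₂ : w₂ ≠ 1) :
    fq q w₁ * fq q w₂ - 1 = q * (w₁ + w₂ + q - 2) / ((w₁ - 1) * (w₂ - 1)) := by
  have : w₁ - 1 ≠ 0 := sub_ne_zero.2 hw₁
  have : w₂ - 1 ≠ 0 := sub_ne_zero.2 hw₂
  rw [fq, fq]
  field_simp
  ring

def Admissible (q : ℂ) (V : Set ℂ) (a b : ℂ) : Prop :=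
  b ≠ 0 ∧ a + b ≠ 0 ∧ ∃ w ∈ V, q * a = b * (w - 1)

section Admissible

variable {q : ℂ} {V : Set ℂ} {a b a₁ b₁ a₂ b₂ : ℂ}

lemma admissible_K2 (hq₀ : q ≠ 0) (hq₁ : q ≠ 1) (hV₀ : 0 ∈ V) : Admissible q V (-q) (q ^ 2) :=
  ⟨pow_ne_zero 2 hq₀, by
    rw [show -q + q ^ 2 = q * (q - 1) by ring]
    exact mul_ne_zero hq₀ (sub_ne_zero.2 hq₁), 0, hV₀, by ring⟩

lemma Admissible.par (hq : q ≠ 0) (hVq : 1 - q ∉ prodSet V) (hVV : prodSet V ⊆ V)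
    (h₁ : Admissible q V a₁ b₁) (h₂ : Admissible q V a₂ b₂)
    (ha : a * q ^ 2 = a₁ * a₂ * q + a₁ * b₂ + a₂ * b₁) (hb : b * q ^ 2 = b₁ * b₂) :
    Admissible q V a b := by
  obtain ⟨hb₁, -, w₁, hw₁, hqa₁⟩ := h₁
  obtain ⟨hb₂, -, w₂, hw₂, hqa₂⟩ := h₂
  have hb₀ : b ≠ 0 := fun h => mul_ne_zero hb₁ hb₂ (by rw [← hb, h, zero_mul])
  have hw : w₁ * w₂ ∈ prodSet V := ⟨w₁, hw₁, w₂, hw₂, rfl⟩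
  have key : q * a = b * (w₁ * w₂ - 1) := mul_left_cancel₀ (pow_ne_zero 2 hq) <| by
    linear_combination q * ha + (q * a₂ + b₂) * hqa₁ + b₁ * w₁ * hqa₂ - (w₁ * w₂ - 1) * hb
  refine ⟨hb₀, fun hab => hVq ?_, w₁ * w₂, hVV hw, key⟩
  have : b * (w₁ * w₂ - (1 - q)) = 0 := by linear_combination q * hab - key
  rwa [← sub_eq_zero.1 ((mul_eq_zero.1 this).resolve_left hb₀)]

lemma Admissible.ser (hq : q ≠ 0) (hV₁ : 1 ∉ V)
    (hf : ∀ v₁ ∈ V, ∀ v₂ ∈ V, fq q v₁ * fq q v₂ ≠ 1 ∧ fq q (fq q v₁ * fq q v₂) ∈ V)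
    (h₁ : Admissible q V a₁ b₁) (h₂ : Admissible q V a₂ b₂)
    (ha : a * q = a₁ * a₂) (hb : b * q = a₁ * b₂ + a₂ * b₁ + b₁ * b₂) :
    Admissible q V a b := by
  obtain ⟨hb₁, hz₁, w₁, hw₁, hqa₁⟩ := h₁
  obtain ⟨hb₂, hz₂, w₂, hw₂, hqa₂⟩ := h₂
  have hw₁' : w₁ ≠ 1 := ne_of_mem_of_not_mem hw₁ hV₁
  have hw₂' : w₂ ≠ 1 := ne_of_mem_of_not_mem hw₂ hV₁
  obtain ⟨hne, hmem⟩ := hf w₁ hw₁ w₂ hw₂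
  set D := w₁ + w₂ + q - 2 with hD_def
  have hD : D ≠ 0 := fun hD => hne <| sub_eq_zero.1 <| by
    rw [fq_mul_fq_sub_one hw₁' hw₂', ← hD_def, hD, mul_zero, zero_div]
  have hbD : q ^ 2 * b = b₁ * b₂ * D := by
    linear_combination q * hb + b₂ * hqa₁ + b₁ * hqa₂
  have hb₀ : b ≠ 0 := fun h => mul_ne_zero (mul_ne_zero hb₁ hb₂) hD (by rw [← hbD, h, mul_zero])
  have hab : q * (a + b) = (a₁ + b₁) * (a₂ + b₂) := by linear_combination ha + hb
  have key : q * a * D = b * ((w₁ - 1) * (w₂ - 1)) := mul_left_cancel₀ (pow_ne_zero 2 hq) <| by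
    linear_combination D * q ^ 2 * ha - (w₁ - 1) * (w₂ - 1) * hbD + D * q * a₂ * hqa₁ +
      D * b₁ * (w₁ - 1) * hqa₂
  refine ⟨hb₀, fun h => mul_ne_zero hz₁ hz₂ (by rw [← hab, h, mul_zero]), _, hmem, ?_⟩
  have : w₁ - 1 ≠ 0 := sub_ne_zero.2 hw₁'
  have : w₂ - 1 ≠ 0 := sub_ne_zero.2 hw₂'
  rw [fq, add_sub_cancel_left, fq_mul_fq_sub_one hw₁' hw₂', ← hD_def]
  field_simp
  linear_combination key

end Admissible

open TTGraph

theorem zero_free_of_invariant_set_general (q : ℂ) (h0 : q ≠ 0) (h1 : q ≠ 1)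
    (V : Set ℂ) (hV0 : (0 : ℂ) ∈ V) (hV1 : (1 : ℂ) ∉ V)
    (hVq : (1 - q) ∉ prodSet V) (hVV : prodSet V ⊆ V)
    (hf : ∀ v₁ ∈ V, ∀ v₂ ∈ V, fq q v₁ * fq q v₂ ≠ 1 ∧ fq q (fq q v₁ * fq q v₂) ∈ V) :
    ∀ G : TTGraph, G.IsSP → (TTGraph.Z G).eval q ≠ 0 := by
  have hadm (G : TTGraph) (hG : G.IsSP) : Admissible q V (G.Zconn.eval q) (G.Zsep.eval q) := by
    induction hG with
    | K2 => simpa [Zconn_K2, Zsep_K2] using admissible_K2 h0 h1 hV0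
    | ser _ _ ih₁ ih₂ =>
      exact ih₁.ser h0 hV1 hf ih₂ (by simpa using congrArg (eval q) (Zconn_ser _ _))
        (by simpa using congrArg (eval q) (Zsep_ser _ _))
    | par _ _ ih₁ ih₂ =>
      exact ih₁.par h0 hVq hVV ih₂ (by simpa using congrArg (eval q) (Zconn_par _ _))
        (by simpa using congrArg (eval q) (Zsep_par _ _))
  intro G hG
  rw [← Zconn_add_Zsep, eval_add]
  exact (hadm G hG).2.1

/-- **Theorem.** If `q ∉ {0,1,2}` and `V ⊆ ℂ` satisfies `0 ∈ V`, `1 ∉ V`,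
`1 - q ∉ V·V`, `V·V ⊆ V` and `f_q(f_q(v₁)·f_q(v₂)) ∈ V` (with
`f_q(v₁)·f_q(v₂) ≠ 1`) for all `v₁, v₂ ∈ V`, then `Z(G;q) ≠ 0` for every
series-parallel graph `G`. -/
theorem zero_free_of_invariant_set (q : ℂ) (h0 : q ≠ 0) (h1 : q ≠ 1) (h2 : q ≠ 2)
    (V : Set ℂ) (hV0 : (0 : ℂ) ∈ V) (hV1 : (1 : ℂ) ∉ V)
    (hVq : (1 - q) ∉ prodSet V) (hVV : prodSet V ⊆ V)
    (hf : ∀ v₁ ∈ V, ∀ v₂ ∈ V, fq q v₁ * fq q v₂ ≠ 1 ∧ fq q (fq q v₁ * fq q v₂) ∈ V) :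
    ∀ G : TTGraph, G.IsSP → (TTGraph.Z G).eval q ≠ 0 :=
  zero_free_of_invariant_set_general q h0 h1 V hV0 hV1 hVq hVV hf
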